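/- arXiv:2503.24022 — 2 statements merged into one kernel-verified Lean document; each statement's English description precedes it below -/
import Mathlib

section
/- (Lemma 1) Let A ∈ ℝ^{n×n} be symmetric, b ∈ ℝⁿ, f(x) = ½ xᵀ A x + bᵀ x, let φ_t be the flow map of the gradient flow ẋ(t) = A x(t) + b, and let M = 2A e^{2A} − e^{2A} + I. Then for every x₀ ∈ ℝⁿ, ∫₀¹ (f(φ₁(x₀)) − f(φ_t(x₀))) dt = ¼ (x₀ + A⁺ b)ᵀ M (x₀ + A⁺ b) + ½ bᵀ P_A b. -/
open Matrix MeasureTheory ProbabilityTheory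
open scoped Classical

noncomputable section

/-- Moore–Penrose pseudoinverse `A⁺` of a real square matrix: the unique `B` with
`A B A = A`, `B A B = B`, and `A B`, `B A` symmetric. -/
def pinv {n : ℕ} (A : Matrix (Fin n) (Fin n) ℝ) : Matrix (Fin n) (Fin n) ℝ :=
  if h : ∃ B : Matrix (Fin n) (Fin n) ℝ,
      A * B * A = A ∧ B * A * B = B ∧ (A * B)ᵀ = A * B ∧ (B * A)ᵀ = B * A
  then h.choose else 0

/-- `P_A = I - A A⁺`, the orthogonal projection onto the null space of `A`. -/
def nullProj {n : ℕ} (A : Matrix (Fin n) (Fin n) ℝ) : Matrix (Fin n) (Fin n) ℝ :=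
  1 - A * pinv A

/-- The matrix exponential `e^A`. -/
def mexp {n : ℕ} (A : Matrix (Fin n) (Fin n) ℝ) : Matrix (Fin n) (Fin n) ℝ :=
  NormedSpace.exp A

/-- The (symmetric) positive semidefinite square root of a positive semidefinite matrix
(junk value `0` if no such root exists). -/
def msqrt {n : ℕ} (S : Matrix (Fin n) (Fin n) ℝ) : Matrix (Fin n) (Fin n) ℝ :=
  if h : ∃ B : Matrix (Fin n) (Fin n) ℝ, B.PosSemidef ∧ B * B = S then h.choose else 0

/-- The matrix logarithm of a symmetric positive definite matrix: the unique symmetric `A`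
with `e^A = S` (junk value `0` if no such `A` exists). -/
def matLog {n : ℕ} (S : Matrix (Fin n) (Fin n) ℝ) : Matrix (Fin n) (Fin n) ℝ :=
  if h : ∃ A : Matrix (Fin n) (Fin n) ℝ, A.IsSymm ∧ mexp A = S then h.choose else 0

/-- The quadratic potential `f(x) = ½ xᵀ A x + bᵀ x`. -/
def quadf {n : ℕ} (A : Matrix (Fin n) (Fin n) ℝ) (b x : Fin n → ℝ) : ℝ :=
  (1 / 2) * (x ⬝ᵥ (A *ᵥ x)) + b ⬝ᵥ x

/-- Squared Euclidean norm `‖v‖²` on `ℝⁿ`. -/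
def sqNorm {n : ℕ} (v : Fin n → ℝ) : ℝ := ∑ i, (v i) ^ 2

/-- Squared Frobenius norm `‖M‖_F²`. -/
def frobSq {n : ℕ} (M : Matrix (Fin n) (Fin n) ℝ) : ℝ := ∑ i, ∑ j, (M i j) ^ 2

/-- The flow map `φ : (t, x₀) ↦ x(t)` of the ODE `ẋ = A x + b`, `x(0) = x₀`. -/
def flowMap {n : ℕ} (A : Matrix (Fin n) (Fin n) ℝ) (b : Fin n → ℝ) :
    ℝ → (Fin n → ℝ) → (Fin n → ℝ) :=
  if h : ∃ φ : ℝ → (Fin n → ℝ) → (Fin n → ℝ),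
      (∀ x₀, φ 0 x₀ = x₀) ∧ ∀ x₀ t, HasDerivAt (fun s => φ s x₀) (A *ᵥ (φ t x₀) + b) t
  then h.choose else fun _ x => x

/-- The standard Gaussian measure on `ℝⁿ`. -/
def stdGaussianPi (n : ℕ) : Measure (Fin n → ℝ) :=
  Measure.pi fun _ => gaussianReal 0 1

/-- The multivariate Gaussian measure `N(μ, Σ)` on `ℝⁿ` (for `Σ` positive semidefinite),
realized as the pushforward of the standard Gaussian by `x ↦ μ + √Σ x`. -/
def multiGaussian {n : ℕ} (μ : Fin n → ℝ) (S : Matrix (Fin n) (Fin n) ℝ) :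
    Measure (Fin n → ℝ) :=
  (stdGaussianPi n).map (fun x => μ + (msqrt S) *ᵥ x)

/-- The Wasserstein KL-divergence `D_WKL(μ‖ν)`: for the quadratic potential
`f(x) = ½ xᵀ A x + bᵀ x` (`A` symmetric) whose gradient flow `φ` pushes `μ` forward to `ν`
at time 1, it is `∫ ∫₀¹ (f(φ₁ x) - f(φ_t x)) dt dμ(x)` (junk value `0` if no such `f`). -/
def DWKL {n : ℕ} (μ ν : Measure (Fin n → ℝ)) : ℝ :=
  if h : ∃ p : Matrix (Fin n) (Fin n) ℝ × (Fin n → ℝ),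
      p.1.IsSymm ∧ μ.map (flowMap p.1 p.2 1) = ν then
    ∫ x, (∫ t in (0:ℝ)..1,
        (quadf h.choose.1 h.choose.2 (flowMap h.choose.1 h.choose.2 1 x)
          - quadf h.choose.1 h.choose.2 (flowMap h.choose.1 h.choose.2 t x))) ∂μ
  else 0

/-- The flow map of the one-dimensional ODE `ẋ = a x + b`. -/
def flow1 (a b : ℝ) : ℝ → ℝ → ℝ :=
  if h : ∃ φ : ℝ → ℝ → ℝ,
      (∀ x₀, φ 0 x₀ = x₀) ∧ ∀ x₀ t, HasDerivAt (fun s => φ s x₀) (a * φ t x₀ + b) t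
  then h.choose else fun _ x => x

/-- The quadratic potential `f(x) = ½ a x² + b x` on `ℝ`. -/
def quad1 (a b x : ℝ) : ℝ := (1 / 2) * a * x ^ 2 + b * x

/-- The Wasserstein KL-divergence for measures on `ℝ`. -/
def DWKL1 (μ ν : Measure ℝ) : ℝ :=
  if h : ∃ p : ℝ × ℝ, μ.map (flow1 p.1 p.2 1) = ν then
    ∫ x, (∫ t in (0:ℝ)..1,
        (quad1 h.choose.1 h.choose.2 (flow1 h.choose.1 h.choose.2 1 x)
          - quad1 h.choose.1 h.choose.2 (flow1 h.choose.1 h.choose.2 t x))) ∂μ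
  else 0

end

/-! With `c = A⁺ b` and `p = P_A b` one has `A c + p = b` and `A p = 0`, so the flow is
`φ_t(x₀) = e^{tA} y - c + t p` with `y = x₀ + c`. Completing the square, `f(φ_t(x₀))` is
`½ yᵀ A e^{2tA} y + t ‖p‖²` up to a constant, and `t ↦ ¼ yᵀ e^{2tA} y` is an antiderivative
of the first term. -/

theorem HasDerivAt.const_dotProduct {ι : Type*} [Fintype ι] (v : ι → ℝ) {f : ℝ → ι → ℝ}
    {f' : ι → ℝ} {t : ℝ} (hf : HasDerivAt f f' t) :
    HasDerivAt (fun s => v ⬝ᵥ f s) (v ⬝ᵥ f') t :=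
  HasDerivAt.fun_sum fun i _ => (hasDerivAt_pi.1 hf i).const_mul (v i)

theorem Matrix.IsSymm.dotProduct_mulVec {n : ℕ} {A : Matrix (Fin n) (Fin n) ℝ} (hA : A.IsSymm)
    (v w : Fin n → ℝ) :
    v ⬝ᵥ (A *ᵥ w) = (A *ᵥ v) ⬝ᵥ w := by
  rw [Matrix.dotProduct_mulVec, ← mulVec_transpose, hA.eq]

section Pseudoinverse

variable {n : ℕ} {A : Matrix (Fin n) (Fin n) ℝ}

theorem exists_penrose_of_isSymm (hA : A.IsSymm) :
    ∃ B : Matrix (Fin n) (Fin n) ℝ,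
      A * B * A = A ∧ B * A * B = B ∧ (A * B)ᵀ = A * B ∧ (B * A)ᵀ = B * A := by
  have hA' : IsSelfAdjoint A := by
    rw [IsSelfAdjoint, star_eq_conjTranspose, conjTranspose_eq_transpose_of_trivial, hA.eq]
  have hcont (f : ℝ → ℝ) : ContinuousOn f (spectrum ℝ A) := finite_real_spectrum.continuousOn f
  have hmul (f g : ℝ → ℝ) : cfc f A * cfc g A = cfc (fun x => f x * g x) A :=
    (cfc_mul f g A (hcont f) (hcont g)).symm
  have hsymm (f : ℝ → ℝ) : (cfc f A)ᵀ = cfc f A := by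
    simpa [IsSelfAdjoint, star_eq_conjTranspose] using cfc_predicate f A
  have hid : cfc (fun x : ℝ => x) A = A := cfc_id' ℝ A
  have hleft (f : ℝ → ℝ) : A * cfc f A = cfc (fun x => x * f x) A := by rw [← hmul, hid]
  have hright (f : ℝ → ℝ) : cfc f A * A = cfc (fun x => f x * x) A := by rw [← hmul, hid]
  refine ⟨cfc (fun x : ℝ => x⁻¹) A, ?_, ?_, ?_, ?_⟩
  · rw [hleft, hright]; simp only [mul_inv_mul_cancel, hid]
  · rw [hright, hmul]; congr! 2 with x; simpa using mul_inv_mul_cancel x⁻¹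
  · rw [hleft, hsymm]
  · rw [hright, hsymm]

theorem pinv_spec (hA : A.IsSymm) :
    A * pinv A * A = A ∧ pinv A * A * pinv A = pinv A ∧
      (A * pinv A)ᵀ = A * pinv A ∧ (pinv A * A)ᵀ = pinv A * A := by
  rw [pinv, dif_pos (exists_penrose_of_isSymm hA)]
  exact (exists_penrose_of_isSymm hA).choose_spec

theorem mul_nullProj (hA : A.IsSymm) : A * nullProj A = 0 := by
  obtain ⟨hAPA, -, hPt, -⟩ := pinv_spec hA
  have hP : (nullProj A)ᵀ = nullProj A := by rw [nullProj, transpose_sub, transpose_one, hPt]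
  calc A * nullProj A = (nullProj A * A)ᵀ := by rw [transpose_mul, hP, hA.eq]
    _ = 0 := by rw [nullProj, sub_mul, one_mul, hAPA, sub_self, transpose_zero]

end Pseudoinverse

section MatrixExponential

attribute [local instance] Matrix.linftyOpNormedRing Matrix.linftyOpNormedAlgebra

variable {n : ℕ} (A : Matrix (Fin n) (Fin n) ℝ)

theorem hasDerivAt_mexp_smul_mulVec (w : Fin n → ℝ) (t : ℝ) :
    HasDerivAt (fun s : ℝ => mexp (s • A) *ᵥ w) (A *ᵥ (mexp (t • A) *ᵥ w)) t := by
  let applyTo : Matrix (Fin n) (Fin n) ℝ →L[ℝ] (Fin n → ℝ) :=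
    (mulVec.addMonoidHomLeft w).toRealLinearMap (continuous_id.matrix_mulVec continuous_const)
  rw [mulVec_mulVec]
  exact applyTo.hasFDerivAt.comp_hasDerivAt t (hasDerivAt_exp_smul_const' A t)

theorem continuous_mexp_smul : Continuous fun t : ℝ => mexp (t • A) :=
  NormedSpace.exp_continuous.comp (continuous_id.smul continuous_const)

theorem commute_mexp_smul (t : ℝ) : Commute A (mexp (t • A)) :=
  ((Commute.refl A).smul_right t).exp_right

theorem mexp_smul_mulVec_of_mulVec_eq_zero {p : Fin n → ℝ} (hp : A *ᵥ p = 0) (t : ℝ) :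
    mexp (t • A) *ᵥ p = p := by
  have hderiv (s : ℝ) : HasDerivAt (fun s : ℝ => mexp (s • A) *ᵥ p) 0 s := by
    convert hasDerivAt_mexp_smul_mulVec A p s using 1
    rw [mulVec_mulVec, (commute_mexp_smul A s).eq, ← mulVec_mulVec, hp, mulVec_zero]
  simpa [mexp] using
    is_const_of_deriv_eq_zero (fun s => (hderiv s).differentiableAt) (fun s => (hderiv s).deriv) t 0

theorem mexp_smul_mul_mul_mexp_smul (t : ℝ) :
    mexp (t • A) * A * mexp (t • A) = A * mexp (t • (2 : ℝ) • A) := by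
  rw [← (commute_mexp_smul A t).eq, mul_assoc, mexp, mexp,
    ← Matrix.exp_add_of_commute _ _ (Commute.refl _), smul_comm, two_smul]

theorem Matrix.IsSymm.mexp_smul {A : Matrix (Fin n) (Fin n) ℝ} (hA : A.IsSymm) (t : ℝ) :
    (mexp (t • A)).IsSymm :=
  (hA.smul t).exp

theorem continuous_dotProduct_mul_mexp_smul_mulVec (B : Matrix (Fin n) (Fin n) ℝ)
    (v w : Fin n → ℝ) : Continuous fun t : ℝ => v ⬝ᵥ ((B * mexp (t • A)) *ᵥ w) :=
  continuous_const.dotProduct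
    ((continuous_const.matrix_mul (continuous_mexp_smul A)).matrix_mulVec continuous_const)

theorem integral_dotProduct_mul_mexp_smul_mulVec (v w : Fin n → ℝ) :
    ∫ t in (0 : ℝ)..1, v ⬝ᵥ ((A * mexp (t • A)) *ᵥ w) = v ⬝ᵥ (mexp A *ᵥ w) - v ⬝ᵥ w := by
  have hderiv (t : ℝ) : HasDerivAt (fun s : ℝ => v ⬝ᵥ (mexp (s • A) *ᵥ w))
      (v ⬝ᵥ ((A * mexp (t • A)) *ᵥ w)) t := by
    rw [← mulVec_mulVec]
    exact (hasDerivAt_mexp_smul_mulVec A w t).const_dotProduct v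
  rw [intervalIntegral.integral_eq_sub_of_hasDerivAt (fun t _ => hderiv t)
    ((continuous_dotProduct_mul_mexp_smul_mulVec A A v w).intervalIntegrable 0 1)]
  simp [mexp]

end MatrixExponential

section Flow

variable {n : ℕ} {A : Matrix (Fin n) (Fin n) ℝ} {b : Fin n → ℝ}

theorem flowMap_eq_of_hasDerivAt (ψ : ℝ → (Fin n → ℝ) → (Fin n → ℝ)) (hψ₀ : ∀ x, ψ 0 x = x)
    (hψ : ∀ x t, HasDerivAt (fun s => ψ s x) (A *ᵥ ψ t x + b) t) :
    flowMap A b = ψ := by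
  have hex : ∃ φ : ℝ → (Fin n → ℝ) → (Fin n → ℝ),
      (∀ x, φ 0 x = x) ∧ ∀ x t, HasDerivAt (fun s => φ s x) (A *ᵥ φ t x + b) t :=
    ⟨ψ, hψ₀, hψ⟩
  obtain ⟨hφ₀, hφ⟩ := hex.choose_spec
  have hK : LipschitzWith _ fun x : Fin n → ℝ => A *ᵥ x + b :=
    (LinearMap.toContinuousLinearMap (mulVecLin A)).lipschitz.add (LipschitzWith.const b)
  rw [flowMap, dif_pos hex]
  funext t x
  exact congrFun (ODE_solution_unique_univ (v := fun _ => _) (s := fun _ => Set.univ)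
    (fun _ => hK.lipschitzOnWith) (fun t => ⟨hφ x t, trivial⟩) (fun t => ⟨hψ x t, trivial⟩)
    (t₀ := 0) (by rw [hφ₀, hψ₀])) t

theorem flowMap_eq_mexp {c p : Fin n → ℝ} (hc : A *ᵥ c + p = b) (hp : A *ᵥ p = 0) (t : ℝ)
    (x : Fin n → ℝ) :
    flowMap A b t x = mexp (t • A) *ᵥ (x + c) - c + t • p := by
  rw [flowMap_eq_of_hasDerivAt (fun s y => mexp (s • A) *ᵥ (y + c) - c + s • p) (fun y => ?_)
    fun y s => ?_]
  · simp [mexp]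
  · refine (((hasDerivAt_mexp_smul_mulVec A (y + c) s).sub_const c).add
      ((hasDerivAt_id s).smul_const p)).congr_deriv ?_
    rw [← hc]
    simp only [mulVec_add, mulVec_sub, mulVec_smul, hp, smul_zero, one_smul]
    abel

end Flow

section Potential

variable {n : ℕ} {A : Matrix (Fin n) (Fin n) ℝ} {b c p : Fin n → ℝ}

theorem quadf_eq_of_mulVec_add (hA : A.IsSymm) (hc : A *ᵥ c + p = b) (x : Fin n → ℝ) :
    quadf A b x = (1 / 2) * ((x + c) ⬝ᵥ (A *ᵥ (x + c))) + p ⬝ᵥ x - (1 / 2) * (c ⬝ᵥ (A *ᵥ c)) := by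
  have hsymm := hA.dotProduct_mulVec c x
  rw [quadf, ← hc]
  simp only [mulVec_add, dotProduct_add, add_dotProduct, dotProduct_comm (A *ᵥ c) x,
    dotProduct_comm p x] at hsymm ⊢
  linarith

theorem exists_quadf_flowMap_eq (hA : A.IsSymm) (hc : A *ᵥ c + p = b) (hp : A *ᵥ p = 0)
    (x : Fin n → ℝ) : ∃ K, ∀ t : ℝ, quadf A b (flowMap A b t x) =
      (1 / 2) * ((x + c) ⬝ᵥ ((A * mexp (t • (2 : ℝ) • A)) *ᵥ (x + c))) + t * (p ⬝ᵥ p) + K := by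
  refine ⟨p ⬝ᵥ (x + c) - p ⬝ᵥ c - (1 / 2) * (c ⬝ᵥ (A *ᵥ c)), fun t => ?_⟩
  rw [flowMap_eq_mexp hc hp, quadf_eq_of_mulVec_add hA hc]
  set y := x + c
  set E := mexp (t • A)
  have hE : E.IsSymm := hA.mexp_smul t
  have hquad : (E *ᵥ y) ⬝ᵥ (A *ᵥ (E *ᵥ y)) = y ⬝ᵥ ((A * mexp (t • (2 : ℝ) • A)) *ᵥ y) := by
    rw [← hE.dotProduct_mulVec, mulVec_mulVec, mulVec_mulVec,
      mexp_smul_mul_mul_mexp_smul]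
  have hcross : p ⬝ᵥ (A *ᵥ (E *ᵥ y)) = 0 := by
    rw [hA.dotProduct_mulVec, hp, zero_dotProduct]
  have hlin : p ⬝ᵥ (E *ᵥ y) = p ⬝ᵥ y := by
    rw [hE.dotProduct_mulVec, mexp_smul_mulVec_of_mulVec_eq_zero A hp]
  have hshift : E *ᵥ y - c + t • p + c = E *ᵥ y + t • p := by abel
  rw [hshift]
  simp only [mulVec_add, mulVec_smul, hp, smul_zero, add_zero, add_dotProduct, smul_dotProduct,
    dotProduct_add, dotProduct_sub, dotProduct_smul, smul_eq_mul, hquad, hcross, hlin]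
  ring

theorem integral_quadf_flowMap_one_sub (hA : A.IsSymm) (hc : A *ᵥ c + p = b) (hp : A *ᵥ p = 0)
    (x : Fin n → ℝ) :
    ∫ t in (0:ℝ)..1, (quadf A b (flowMap A b 1 x) - quadf A b (flowMap A b t x)) =
      (1 / 4) * ((x + c) ⬝ᵥ (((2 : ℝ) • (A * mexp ((2 : ℝ) • A)) - mexp ((2 : ℝ) • A) + 1) *ᵥ
        (x + c))) + (1 / 2) * (p ⬝ᵥ p) := by
  obtain ⟨K, hK⟩ := exists_quadf_flowMap_eq hA hc hp x
  set y := x + c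
  set Q : ℝ → ℝ := fun t => y ⬝ᵥ ((A * mexp (t • (2 : ℝ) • A)) *ᵥ y)
  have hQc : Continuous Q := continuous_dotProduct_mul_mexp_smul_mulVec _ A y y
  have hQ : 2 * ∫ t in (0:ℝ)..1, Q t = y ⬝ᵥ (mexp ((2 : ℝ) • A) *ᵥ y) - y ⬝ᵥ y := by
    rw [← integral_dotProduct_mul_mexp_smul_mulVec, ← intervalIntegral.integral_const_mul]
    simp only [Q, smul_mul_assoc, smul_mulVec, dotProduct_smul, smul_eq_mul]
  calc _ = ∫ t in (0:ℝ)..1, ((1 / 2) * Q 1 + p ⬝ᵥ p) - ((1 / 2) * Q t + t * (p ⬝ᵥ p)) := by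
        simp only [hK, Q, one_mul, add_sub_add_right_eq_sub]
    _ = ((1 / 2) * Q 1 + p ⬝ᵥ p) - ((1 / 2) * ∫ t in (0:ℝ)..1, Q t) - (1 / 2) * (p ⬝ᵥ p) := by
        rw [intervalIntegral.integral_sub intervalIntegrable_const
            (Continuous.intervalIntegrable (by fun_prop) _ _),
          intervalIntegral.integral_add ((hQc.const_mul _).intervalIntegrable _ _)
            (Continuous.intervalIntegrable (by fun_prop) _ _),
          intervalIntegral.integral_const_mul, intervalIntegral.integral_mul_const, integral_id,
          intervalIntegral.integral_const]
        simp only [sub_zero, one_smul]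
        ring
    _ = _ := by
      simp only [Q, one_smul, add_mulVec, sub_mulVec, smul_mulVec, one_mulVec, dotProduct_add,
        dotProduct_sub, dotProduct_smul, smul_eq_mul]
      linarith

end Potential

/-- **Lemma 1.** Time integral of potential differences along the gradient flow. -/
theorem stmt2 {n : ℕ} (A : Matrix (Fin n) (Fin n) ℝ) (hA : A.IsSymm) (b : Fin n → ℝ)
    (M : Matrix (Fin n) (Fin n) ℝ)
    (hM : M = (2 : ℝ) • (A * mexp ((2 : ℝ) • A)) - mexp ((2 : ℝ) • A) + 1)
    (x₀ : Fin n → ℝ) :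
    ∫ t in (0:ℝ)..1, (quadf A b (flowMap A b 1 x₀) - quadf A b (flowMap A b t x₀)) =
      (1 / 4) * ((x₀ + pinv A *ᵥ b) ⬝ᵥ (M *ᵥ (x₀ + pinv A *ᵥ b)))
        + (1 / 2) * (b ⬝ᵥ (nullProj A *ᵥ b)) := by
  set c := pinv A *ᵥ b
  set p := nullProj A *ᵥ b
  have hc : A *ᵥ c + p = b := by
    rw [mulVec_mulVec, ← add_mulVec, nullProj, add_sub_cancel, one_mulVec]
  have hp : A *ᵥ p = 0 := by rw [mulVec_mulVec, mul_nullProj hA, zero_mulVec]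
  have hbp : b ⬝ᵥ p = p ⬝ᵥ p := by
    rw [← hc, add_dotProduct, ← hA.dotProduct_mulVec, hp, dotProduct_zero, zero_add]
  rw [integral_quadf_flowMap_one_sub hA hc hp, hM, hbp]
end

section
/- For every symmetric matrix A ∈ ℝ^{n×n}, the matrix (e^{A} − I) A⁺ + P_A is invertible. -/
open Matrix MeasureTheory ProbabilityTheory
open scoped Classical

/-! For symmetric `A` every matrix in sight is a function of `A` in the sense of the continuous
functional calculus: `e^A = exp(A)`, and `A⁺ = f(A)` for `f x = x⁻¹` with Lean's `0⁻¹ = 0`,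
because the Moore–Penrose equations hold pointwise on the spectrum. So the matrix is `g(A)` with
`g x = (eˣ - 1) x⁻¹ + (1 - x x⁻¹)`, which is `(eˣ - 1) / x ≠ 0` for `x ≠ 0` and `1` at `x = 0`;
a function of `A` is invertible exactly when it does not vanish on the spectrum. -/

def Matrix.IsMoorePenroseInverse {m n R : Type*} [Fintype m] [Fintype n] [CommSemiring R]
    (A : Matrix m n R) (B : Matrix n m R) : Prop :=
  A * B * A = A ∧ B * A * B = B ∧ (A * B)ᵀ = A * B ∧ (B * A)ᵀ = B * A

namespace Matrix.IsMoorePenroseInverse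

variable {m n R : Type*} [Fintype m] [Fintype n] [CommSemiring R]
  {A : Matrix m n R} {B C : Matrix n m R}

theorem mul_right_eq (hB : A.IsMoorePenroseInverse B) (hC : A.IsMoorePenroseInverse C) :
    A * B = A * C :=
  calc A * B = (A * C * A * B)ᵀ := by rw [hC.1, hB.2.2.1]
    _ = (A * B)ᵀ * (A * C)ᵀ := by rw [Matrix.mul_assoc (A * C), transpose_mul]
    _ = A * B * A * C := by rw [hB.2.2.1, hC.2.2.1, ← Matrix.mul_assoc (A * B)]
    _ = A * C := by rw [hB.1]

theorem mul_left_eq (hB : A.IsMoorePenroseInverse B) (hC : A.IsMoorePenroseInverse C) :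
    B * A = C * A :=
  calc B * A = (B * (A * C * A))ᵀ := by rw [hC.1, hB.2.2.2]
    _ = (C * A)ᵀ * (B * A)ᵀ := by rw [Matrix.mul_assoc A, ← Matrix.mul_assoc B, transpose_mul]
    _ = C * (A * B * A) := by rw [hB.2.2.2, hC.2.2.2, Matrix.mul_assoc C, ← Matrix.mul_assoc A]
    _ = C * A := by rw [hB.1]

theorem unique (hB : A.IsMoorePenroseInverse B) (hC : A.IsMoorePenroseInverse C) : B = C :=
  calc B = C * A * B := by rw [← hB.mul_left_eq hC, hB.2.1]
    _ = C := by rw [Matrix.mul_assoc, hB.mul_right_eq hC, ← Matrix.mul_assoc, hC.2.1]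

end Matrix.IsMoorePenroseInverse

theorem pinv_eq_of_isMoorePenroseInverse {n : ℕ} {A B : Matrix (Fin n) (Fin n) ℝ}
    (h : A.IsMoorePenroseInverse B) : pinv A = B := by
  have hex : ∃ B, A.IsMoorePenroseInverse B := ⟨B, h⟩
  exact (dif_pos hex).trans (hex.choose_spec.unique h)

namespace Matrix

variable {m : Type*} [Fintype m] [DecidableEq m] (f g : ℝ → ℝ) (A : Matrix m m ℝ)

theorem continuousOn_spectrum_real : ContinuousOn f (spectrum ℝ A) :=
  A.finite_real_spectrum.continuousOn f

theorem transpose_cfc : (cfc f A)ᵀ = cfc f A :=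
  isHermitian_iff_isSymm.mp (cfc_predicate f A)

theorem real_cfc_add : cfc (fun x => f x + g x) A = cfc f A + cfc g A :=
  cfc_add A f g (A.continuousOn_spectrum_real f) (A.continuousOn_spectrum_real g)

theorem real_cfc_sub : cfc (fun x => f x - g x) A = cfc f A - cfc g A :=
  cfc_sub f g A (A.continuousOn_spectrum_real f) (A.continuousOn_spectrum_real g)

theorem real_cfc_mul : cfc (fun x => f x * g x) A = cfc f A * cfc g A :=
  cfc_mul f g A (A.continuousOn_spectrum_real f) (A.continuousOn_spectrum_real g)

end Matrix

theorem pinv_eq_cfc_inv {n : ℕ} {A : Matrix (Fin n) (Fin n) ℝ} (hA : IsSelfAdjoint A) :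
    pinv A = cfc (fun x : ℝ => x⁻¹) A := by
  have h_mul_inv : A * cfc (fun x : ℝ => x⁻¹) A = cfc (fun x : ℝ => x * x⁻¹) A := by
    rw [real_cfc_mul, cfc_id' ℝ A]
  have h_inv_mul : cfc (fun x : ℝ => x⁻¹) A * A = cfc (fun x : ℝ => x⁻¹ * x) A := by
    rw [real_cfc_mul, cfc_id' ℝ A]
  refine pinv_eq_of_isMoorePenroseInverse ⟨?_, ?_, ?_, ?_⟩
  · calc A * cfc (fun x : ℝ => x⁻¹) A * A = cfc (fun x : ℝ => x * x⁻¹ * x) A := by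
          rw [real_cfc_mul, h_mul_inv, cfc_id' ℝ A]
      _ = A := by simp only [mul_inv_mul_cancel, cfc_id' ℝ A]
  · calc cfc (fun x : ℝ => x⁻¹) A * A * cfc (fun x : ℝ => x⁻¹) A
          = cfc (fun x : ℝ => x⁻¹ * x * x⁻¹) A := by rw [real_cfc_mul, h_inv_mul]
      _ = cfc (fun x : ℝ => x⁻¹) A := by
          congr 1 with x
          simpa using mul_inv_mul_cancel x⁻¹
  · rw [h_mul_inv, transpose_cfc]
  · rw [h_inv_mul, transpose_cfc]

-- `NormedSpace.exp` depends only on the topology, so any compatible normed algebra structure works.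
open scoped Matrix.Norms.L2Operator in
theorem mexp_eq_cfc_exp {n : ℕ} {A : Matrix (Fin n) (Fin n) ℝ} (hA : IsSelfAdjoint A) :
    mexp A = cfc Real.exp A :=
  (CFC.real_exp_eq_normedSpace_exp hA).symm

theorem Real.exp_sub_one_mul_inv_add_one_sub_mul_inv_ne_zero (x : ℝ) :
    (Real.exp x - 1) * x⁻¹ + (1 - x * x⁻¹) ≠ 0 := by
  rcases eq_or_ne x 0 with rfl | hx
  · simp
  · simp [hx, sub_eq_zero]

/-- For symmetric `A`, the matrix `(e^A − I) A⁺ + P_A` is invertible. -/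
theorem stmt4 {n : ℕ} (A : Matrix (Fin n) (Fin n) ℝ) (hA : A.IsSymm) :
    IsUnit ((mexp A - 1) * pinv A + nullProj A) := by
  have hA' : IsSelfAdjoint A := isHermitian_iff_isSelfAdjoint.mp (isHermitian_iff_isSymm.mpr hA)
  have hcfc : (mexp A - 1) * pinv A + nullProj A
      = cfc (fun x => (Real.exp x - 1) * x⁻¹ + (1 - x * x⁻¹)) A := by
    rw [real_cfc_add, real_cfc_mul, real_cfc_sub, real_cfc_sub, real_cfc_mul, cfc_const_one ℝ A,
      cfc_id' ℝ A, nullProj, pinv_eq_cfc_inv hA', mexp_eq_cfc_exp hA']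
  rw [hcfc, isUnit_cfc_iff _ _ (A.continuousOn_spectrum_real _)]
  exact fun x _ => Real.exp_sub_one_mul_inv_add_one_sub_mul_inv_ne_zero x
end
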